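/- Any Manhattan network on a set T of terminals with two points t_i, t_j forming a vertical strip must contain both vertical sides of the strip rectangle R(t_i,t_j); consequently, in the directed (bidirected) setting, the entire boundary of R(t_i,t_j) belongs to every bidirected Manhattan network on T, oriented either fully clockwise or fully counterclockwise. -/

import Mathlib

open MeasureTheory

noncomputable section

/-- l1 (Manhattan) distance in the plane. -/
def d1 (p q : ℝ × ℝ) : ℝ := |p.1 - q.1| + |p.2 - q.2|

/-- Smallest axis-parallel rectangle containing `a` and `b`. -/
def Rect (a b : ℝ × ℝ) : Set (ℝ × ℝ) :=
  {m | min a.1 b.1 ≤ m.1 ∧ m.1 ≤ max a.1 b.1 ∧ min a.2 b.2 ≤ m.2 ∧ m.2 ≤ max a.2 b.2}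

/-- Length of a polygonal path given by its list of vertices. -/
def pathLen : List (ℝ × ℝ) → ℝ
  | [] => 0
  | [_] => 0
  | p :: q :: rest => d1 p q + pathLen (q :: rest)

/-- `P` is a path starting at `a` and ending at `b`. -/
def IsPathFrom (P : List (ℝ × ℝ)) (a b : ℝ × ℝ) : Prop :=
  P.head? = some a ∧ P.getLast? = some b

/-- The set of points of the polygonal path `P`. -/
def polyline (P : List (ℝ × ℝ)) : Set (ℝ × ℝ) :=
  ⋃ pr ∈ P.zip P.tail, segment ℝ pr.1 pr.2

/-- There is a directed Manhattan path from `a` to `b` using the directed edges of `N`. -/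
def DirManPath (N : Set ((ℝ × ℝ) × (ℝ × ℝ))) (a b : ℝ × ℝ) : Prop :=
  ∃ P : List (ℝ × ℝ), IsPathFrom P a b ∧ P.Chain' (fun u v => (u, v) ∈ N) ∧
    pathLen P = d1 a b

/-- `p` is a grid point of `Γ(T)`. -/
def Gpt (T : Set (ℝ × ℝ)) (p : ℝ × ℝ) : Prop :=
  (∃ t ∈ T, t.1 = p.1) ∧ (∃ t ∈ T, t.2 = p.2)

/-- `(u,v)` is a (minimal) grid edge of `Γ(T)`. -/
def GridEdge (T : Set (ℝ × ℝ)) (u v : ℝ × ℝ) : Prop :=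
  u ≠ v ∧ (u.1 = v.1 ∨ u.2 = v.2) ∧ Gpt T u ∧ Gpt T v ∧
    ∀ w, Gpt T w → w ∈ Rect u v → w = u ∨ w = v

/-! Since no grid column lies strictly between `ti` and `tj`, a Manhattan path from `ti` to `tj`
runs vertically along the column of `ti` to some height `y`, crosses the strip by a single
horizontal grid edge at height `y`, and runs vertically along the column of `tj`; the path back
crosses at some height `y'` in the same way. If neither crossing were at the height of `ti`, the
first edge of the forward path and the last edge of the backward path would be vertical grid
edges at `ti` on the same side, hence the same edge traversed in both directions. So one of
`y, y'` is the height of `ti`, one is the height of `tj`, and the two paths together run around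
the boundary of the rectangle. -/

open Set

section LinearOrder

variable {α : Type*} [LinearOrder α]

lemma mem_uIcc_of_mem_uIcc_of_mem_uIcc {a b c y : α} (hc : c ∈ uIcc a b) (hy : y ∈ uIcc c b) :
    c ∈ uIcc a y := by
  simp only [mem_uIcc] at *; grind

lemma mem_uIcc_or_mem_uIcc {a q c c' : α} (hc : c ∈ uIcc a q) (hc' : c' ∈ uIcc a q) :
    c ∈ uIcc a c' ∨ c' ∈ uIcc a c := by
  simp only [mem_uIcc] at *; grind

end LinearOrder

lemma abs_sub_add_abs_sub_eq_iff {x c y : ℝ} : |x - c| + |c - y| = |x - y| ↔ c ∈ uIcc x y := by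
  simp only [← Real.dist_eq]
  rw [dist_add_dist_eq_iff, ← mem_segment_iff_wbtw, segment_eq_uIcc]

lemma mem_rect_iff {a b m : ℝ × ℝ} : m ∈ Rect a b ↔ m.1 ∈ uIcc a.1 b.1 ∧ m.2 ∈ uIcc a.2 b.2 := by
  simp only [Rect, mem_ofPred_eq, uIcc, mem_Icc, and_assoc]

lemma rect_eq_uIcc (a b : ℝ × ℝ) : Rect a b = uIcc a b := by
  ext m; rw [mem_rect_iff, uIcc_prod_eq]; rfl

lemma rect_comm (a b : ℝ × ℝ) : Rect a b = Rect b a := by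
  rw [rect_eq_uIcc, rect_eq_uIcc, uIcc_comm]

lemma d1_triangle (a b c : ℝ × ℝ) : d1 a c ≤ d1 a b + d1 b c := by
  unfold d1; linarith [abs_sub_le a.1 b.1 c.1, abs_sub_le a.2 b.2 c.2]

lemma d1_add_d1_eq_iff {a b c : ℝ × ℝ} : d1 a c + d1 c b = d1 a b ↔ c ∈ Rect a b := by
  rw [mem_rect_iff, ← abs_sub_add_abs_sub_eq_iff, ← abs_sub_add_abs_sub_eq_iff]
  unfold d1
  constructor
  · intro h; constructor <;> linarith [abs_sub_le a.1 c.1 b.1, abs_sub_le a.2 c.2 b.2]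
  · rintro ⟨h1, h2⟩; linarith

lemma d1_le_pathLen : ∀ {P : List (ℝ × ℝ)} {a b : ℝ × ℝ}, IsPathFrom P a b → d1 a b ≤ pathLen P
  | [], _, _, h => by simp [IsPathFrom] at h
  | [p], a, b, h => by
    obtain ⟨rfl, rfl⟩ : p = a ∧ p = b := by simpa [IsPathFrom] using h
    simp [d1, pathLen]
  | p :: q :: l, a, b, ⟨hp, hb⟩ => by
    obtain rfl : p = a := by simpa using hp
    have := d1_le_pathLen (P := q :: l) ⟨rfl, by simpa using hb⟩
    simp only [pathLen]
    linarith [d1_triangle p q b]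

namespace DirManPath

variable {N : Set ((ℝ × ℝ) × (ℝ × ℝ))} {a b c : ℝ × ℝ}

lemma refl (N : Set ((ℝ × ℝ) × (ℝ × ℝ))) (a : ℝ × ℝ) : DirManPath N a a :=
  ⟨[a], ⟨rfl, rfl⟩, List.isChain_singleton a, by simp [pathLen, d1]⟩

lemma of_mem (h : (a, b) ∈ N) : DirManPath N a b :=
  ⟨[a, b], ⟨rfl, rfl⟩, List.isChain_pair.2 h, by simp [pathLen, d1]⟩

lemma cons (hac : (a, c) ∈ N) (hc : c ∈ Rect a b) (h : DirManPath N c b) : DirManPath N a b := by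
  obtain ⟨_ | ⟨q, l⟩, ⟨hq, hb⟩, hch, hlen⟩ := h
  · simp at hq
  obtain rfl : q = c := by simpa using hq
  refine ⟨a :: q :: l, ⟨rfl, by simpa using hb⟩, List.isChain_cons_cons.2 ⟨hac, hch⟩, ?_⟩
  simp only [pathLen] at hlen ⊢
  rw [hlen, d1_add_d1_eq_iff.2 hc]

lemma head_induction_on {motive : ℝ × ℝ → Prop} (h : DirManPath N a b) (refl : motive b)
    (head : ∀ {a c}, (a, c) ∈ N → c ∈ Rect a b → DirManPath N c b → motive c → motive a) :
    motive a := by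
  obtain ⟨P, hP, hch, hlen⟩ := h
  induction P generalizing a with
  | nil => simp [IsPathFrom] at hP
  | cons p l ih =>
    obtain rfl : p = a := by simpa using hP.1
    obtain _ | ⟨c, l⟩ := l
    · obtain rfl : p = b := by simpa using hP.2
      exact refl
    have hP' : IsPathFrom (c :: l) c b := ⟨rfl, by simpa using hP.2⟩
    obtain ⟨hpc, hch'⟩ := List.isChain_cons_cons.1 hch
    simp only [pathLen] at hlen
    have hlen' : pathLen (c :: l) = d1 c b := by
      linarith [d1_le_pathLen hP', d1_triangle p c b]
    have hc : c ∈ Rect p b := d1_add_d1_eq_iff.1 (by linarith)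
    exact head hpc hc ⟨c :: l, hP', hch', hlen'⟩ (ih hP' hch' hlen')

lemma exists_head (h : DirManPath N a b) (hab : a ≠ b) : ∃ c, (a, c) ∈ N ∧ c ∈ Rect a b :=
  h.head_induction_on (motive := fun a => a ≠ b → ∃ c, (a, c) ∈ N ∧ c ∈ Rect a b)
    (fun h => (h rfl).elim) (fun hac hc _ _ _ => ⟨_, hac, hc⟩) hab

lemma exists_last (h : DirManPath N a b) (hab : a ≠ b) : ∃ c, (c, b) ∈ N ∧ c ∈ Rect a b := by
  refine h.head_induction_on (motive := fun a => a ≠ b → ∃ c, (c, b) ∈ N ∧ c ∈ Rect a b)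
    (fun h => (h rfl).elim) (fun {a c} hac hc _ ih _ => ?_) hab
  by_cases hcb : c = b
  · subst hcb
    exact ⟨a, hac, by simp [rect_eq_uIcc]⟩
  · obtain ⟨d, hdb, hd⟩ := ih hcb
    rw [rect_eq_uIcc] at hc hd ⊢
    exact ⟨d, hdb, uIcc_subset_uIcc_right hc hd⟩

end DirManPath

section Network

variable {T : Set (ℝ × ℝ)} {N : Set ((ℝ × ℝ) × (ℝ × ℝ))}

lemma GridEdge.symm {u v : ℝ × ℝ} (h : GridEdge T u v) : GridEdge T v u :=
  ⟨h.1.symm, h.2.1.imp Eq.symm Eq.symm, h.2.2.2.1, h.2.2.1,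
    fun w hw hwr => (h.2.2.2.2 w hw (rect_comm u v ▸ hwr)).symm⟩

lemma GridEdge.eq_of_mem_rect {p c c' : ℝ × ℝ} (h : GridEdge T p c) (h' : GridEdge T p c')
    (hc : c ∈ Rect p c') : c = c' :=
  (h'.2.2.2.2 c h.2.2.2.1 hc).resolve_left h.1.symm

def EmptyStrip (T : Set (ℝ × ℝ)) (x x' : ℝ) : Prop :=
  ∀ w, Gpt T w → w.1 ∈ uIcc x x' → w.1 = x ∨ w.1 = x'

lemma EmptyStrip.symm {x x' : ℝ} (h : EmptyStrip T x x') : EmptyStrip T x' x :=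
  fun w hw hwx => (h w hw (uIcc_comm x' x ▸ hwx)).symm

lemma DirManPath.exists_crossing (hgrid : ∀ e ∈ N, GridEdge T e.1 e.2) {a b : ℝ × ℝ}
    (hstrip : EmptyStrip T a.1 b.1) (hab : a.1 ≠ b.1) (h : DirManPath N a b) :
    ∃ y ∈ uIcc a.2 b.2, DirManPath N a (a.1, y) ∧ ((a.1, y), (b.1, y)) ∈ N ∧
      DirManPath N (b.1, y) b := by
  generalize hx : a.1 = x at hstrip hab ⊢
  refine h.head_induction_on (motive := fun a => a.1 = x → ∃ y ∈ uIcc a.2 b.2,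
      DirManPath N a (x, y) ∧ ((x, y), (b.1, y)) ∈ N ∧ DirManPath N (b.1, y) b)
    (fun hb => (hab hb.symm).elim) (fun {a c} hac hc hcb ih hax => ?_) hx
  obtain ⟨-, hpar, -, hc_grid, -⟩ := hgrid _ hac
  obtain ⟨hc1, hc2⟩ := mem_rect_iff.1 hc
  rcases hstrip c hc_grid (hax ▸ hc1) with hcx | hcx
  · obtain ⟨y, hy, hcy, hedge, hyb⟩ := ih hcx
    refine ⟨y, uIcc_subset_uIcc_right hc2 hy, hcy.cons hac ?_, hedge, hyb⟩
    exact mem_rect_iff.2 ⟨by simp [hax, hcx], mem_uIcc_of_mem_uIcc_of_mem_uIcc hc2 hy⟩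
  · have hac2 : a.2 = c.2 := hpar.resolve_left fun h => hab (by rw [← hax, h, hcx])
    obtain ⟨a1, a2⟩ := a
    obtain ⟨c1, c2⟩ := c
    simp only at hax hcx hac2
    subst hax hcx hac2
    exact ⟨a2, left_mem_uIcc, DirManPath.refl N _, hac, hcb⟩

lemma eq_or_eq_of_dirManPath_vertical (hgrid : ∀ e ∈ N, GridEdge T e.1 e.2)
    (hsingle : ∀ u v : ℝ × ℝ, (u, v) ∈ N → (v, u) ∉ N) {p : ℝ × ℝ} {y y' q : ℝ}
    (hy : y ∈ uIcc p.2 q) (hy' : y' ∈ uIcc p.2 q)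
    (hout : DirManPath N p (p.1, y)) (hin : DirManPath N (p.1, y') p) : y = p.2 ∨ y' = p.2 := by
  by_contra! hne
  obtain ⟨c, hpc, hc⟩ := hout.exists_head fun h => hne.1 (congrArg Prod.snd h).symm
  obtain ⟨c', hcp, hc'⟩ := hin.exists_last fun h => hne.2 (congrArg Prod.snd h)
  simp only [mem_rect_iff, uIcc_self, mem_singleton_iff] at hc hc'
  have hc2 : c.2 ∈ uIcc p.2 q := uIcc_subset_uIcc_left hy hc.2
  have hc2' : c'.2 ∈ uIcc p.2 q := uIcc_subset_uIcc hy' left_mem_uIcc hc'.2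
  rcases mem_uIcc_or_mem_uIcc hc2 hc2' with h | h
  · obtain rfl := (hgrid _ hpc).eq_of_mem_rect (hgrid _ hcp).symm
      (mem_rect_iff.2 ⟨by simp [hc.1], h⟩)
    exact hsingle _ _ hpc hcp
  · obtain rfl := (hgrid _ hcp).symm.eq_of_mem_rect (hgrid _ hpc)
      (mem_rect_iff.2 ⟨by simp [hc'.1], h⟩)
    exact hsingle _ _ hpc hcp

end Network

theorem rect_boundary_cycle {T : Set (ℝ × ℝ)} {N : Set ((ℝ × ℝ) × (ℝ × ℝ))}
    (hgrid : ∀ e ∈ N, GridEdge T e.1 e.2) (hsingle : ∀ u v : ℝ × ℝ, (u, v) ∈ N → (v, u) ∉ N)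
    {a b : ℝ × ℝ} (hstrip : EmptyStrip T a.1 b.1) (hx : a.1 ≠ b.1) (hy : a.2 ≠ b.2)
    (hab : DirManPath N a b) (hba : DirManPath N b a) :
    (DirManPath N a (a.1, b.2) ∧ DirManPath N (a.1, b.2) b ∧
      DirManPath N b (b.1, a.2) ∧ DirManPath N (b.1, a.2) a) ∨
    (DirManPath N a (b.1, a.2) ∧ DirManPath N (b.1, a.2) b ∧
      DirManPath N b (a.1, b.2) ∧ DirManPath N (a.1, b.2) a) := by
  obtain ⟨y, hy_mem, hay, hyy, hyb⟩ := hab.exists_crossing hgrid hstrip hx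
  obtain ⟨y', hy'_mem, hby', hyy', hya⟩ := hba.exists_crossing hgrid hstrip.symm hx.symm
  rw [uIcc_comm] at hy'_mem
  have hat_a := eq_or_eq_of_dirManPath_vertical hgrid hsingle hy_mem hy'_mem hay hya
  rw [uIcc_comm] at hy_mem hy'_mem
  have hat_b := eq_or_eq_of_dirManPath_vertical hgrid hsingle hy'_mem hy_mem hby' hyb
  rcases hat_a with rfl | rfl
  · obtain rfl := hat_b.resolve_right hy
    exact Or.inr ⟨.of_mem hyy, hyb, .of_mem hyy', hya⟩
  · obtain rfl := hat_b.resolve_left hy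
    exact Or.inl ⟨hay, .of_mem hyy, hby', .of_mem hyy'⟩

theorem stmt5_general (T : Set (ℝ × ℝ))
    (hy : ∀ a ∈ T, ∀ b ∈ T, a.2 = b.2 → a = b)
    (N : Set ((ℝ × ℝ) × (ℝ × ℝ)))
    (hgrid : ∀ e ∈ N, GridEdge T e.1 e.2)
    (hsingle : ∀ u v : ℝ × ℝ, (u, v) ∈ N → (v, u) ∉ N)
    (hman : ∀ a ∈ T, ∀ b ∈ T, DirManPath N a b)
    (ti tj : ℝ × ℝ) (hi : ti ∈ T) (hj : tj ∈ T) (hij : ti.1 < tj.1)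
    (hcons : ∀ t ∈ T, ¬(ti.1 < t.1 ∧ t.1 < tj.1))
    (p00 p01 p10 p11 : ℝ × ℝ)
    (h00 : p00 = (ti.1, min ti.2 tj.2)) (h01 : p01 = (ti.1, max ti.2 tj.2))
    (h10 : p10 = (tj.1, min ti.2 tj.2)) (h11 : p11 = (tj.1, max ti.2 tj.2)) :
    (DirManPath N p00 p01 ∧ DirManPath N p01 p11 ∧
     DirManPath N p11 p10 ∧ DirManPath N p10 p00) ∨
    (DirManPath N p01 p00 ∧ DirManPath N p00 p10 ∧
     DirManPath N p10 p11 ∧ DirManPath N p11 p01) := by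
  have hstrip : EmptyStrip T ti.1 tj.1 := by
    rintro w ⟨⟨t, ht, htw⟩, -⟩ hw
    rw [uIcc_of_lt hij, mem_Icc, ← htw] at hw
    rw [← htw]
    by_contra! hne
    exact hcons t ht ⟨hw.1.lt_of_ne hne.1.symm, hw.2.lt_of_ne hne.2⟩
  have hy' : ti.2 ≠ tj.2 := fun h => hij.ne (congrArg Prod.fst (hy ti hi tj hj h))
  subst h00 h01 h10 h11
  have hcycle := rect_boundary_cycle hgrid hsingle hstrip hij.ne hy' (hman ti hi tj hj)
    (hman tj hj ti hi)
  rcases hy'.lt_or_gt with h | h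
  · simp only [min_eq_left h.le, max_eq_right h.le, Prod.mk.eta]
    tauto
  · simp only [min_eq_right h.le, max_eq_left h.le, Prod.mk.eta]
    tauto

/-- Every bidirected Manhattan network on `T` contains the whole boundary of a vertical
strip `R(ti,tj)`, oriented clockwise or counterclockwise. -/
theorem stmt5 (T : Set (ℝ × ℝ))
    (hx : ∀ a ∈ T, ∀ b ∈ T, a.1 = b.1 → a = b)
    (hy : ∀ a ∈ T, ∀ b ∈ T, a.2 = b.2 → a = b)
    (N : Set ((ℝ × ℝ) × (ℝ × ℝ)))
    (hgrid : ∀ e ∈ N, GridEdge T e.1 e.2)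
    (hsingle : ∀ u v : ℝ × ℝ, (u, v) ∈ N → (v, u) ∉ N)
    (hman : ∀ a ∈ T, ∀ b ∈ T, DirManPath N a b)
    (ti tj : ℝ × ℝ) (hi : ti ∈ T) (hj : tj ∈ T) (hij : ti.1 < tj.1)
    (hcons : ∀ t ∈ T, ¬(ti.1 < t.1 ∧ t.1 < tj.1))
    (hempty : Rect ti tj ∩ T = {ti, tj})
    (p00 p01 p10 p11 : ℝ × ℝ)
    (h00 : p00 = (ti.1, min ti.2 tj.2)) (h01 : p01 = (ti.1, max ti.2 tj.2))
    (h10 : p10 = (tj.1, min ti.2 tj.2)) (h11 : p11 = (tj.1, max ti.2 tj.2)) :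
    (DirManPath N p00 p01 ∧ DirManPath N p01 p11 ∧
     DirManPath N p11 p10 ∧ DirManPath N p10 p00) ∨
    (DirManPath N p01 p00 ∧ DirManPath N p00 p10 ∧
     DirManPath N p10 p11 ∧ DirManPath N p11 p01) :=
  stmt5_general T hy N hgrid hsingle hman ti tj hi hj hij hcons p00 p01 p10 p11 h00 h01 h10 h11
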